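/- Let n ≥ 1, μ̃ ∈ ℝⁿ, let Σ̃ be a positive semidefinite n×n real matrix, and let θ > 0. Then the moment uncertainty set V_θ(μ̃, Σ̃) := { (μ, M) ∈ ℝⁿ × S₊ⁿ : M − μμᵀ is positive semidefinite and ‖μ − μ̃‖₂² + B²(M − μμᵀ, Σ̃) ≤ θ² } is a convex subset of ℝⁿ × Sⁿ, where Sⁿ is the space of symmetric n×n real matrices and S₊ⁿ the cone of positive semidefinite matrices in Sⁿ. -/

import Mathlib

open Matrix
open scoped Classical

/-- The positive semidefinite square root of a matrix (junk value `0` if the matrix is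
not positive semidefinite). -/
noncomputable def psdSqrt {n : ℕ} (A : Matrix (Fin n) (Fin n) ℝ) :
    Matrix (Fin n) (Fin n) ℝ :=
  if h : A.PosSemidef then
    h.1.eigenvectorUnitary.1 * diagonal (Real.sqrt ∘ h.1.eigenvalues) *
      (star h.1.eigenvectorUnitary : Matrix (Fin n) (Fin n) ℝ)
  else 0

/-- The squared Gelbrich/Bures distance
`B²(Σ₁, Σ₂) = Tr[Σ₁ + Σ₂ − 2(Σ₁^{1/2} Σ₂ Σ₁^{1/2})^{1/2}]`. -/
noncomputable def Bsq {n : ℕ} (S1 S2 : Matrix (Fin n) (Fin n) ℝ) : ℝ :=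
  (S1 + S2 - (2 : ℝ) • psdSqrt (psdSqrt S1 * S2 * psdSqrt S1)).trace

namespace GelAux
variable {n : ℕ}

open scoped MatrixOrder in
lemma psdSqrt_eq_cfc {A : Matrix (Fin n) (Fin n) ℝ} (hA : A.PosSemidef) :
    psdSqrt A = CFC.sqrt A := by
  rw [CFC.sqrt_eq_real_sqrt A (Matrix.nonneg_iff_posSemidef.mpr hA), cfcₙ_eq_cfc,
    hA.1.cfc_eq, psdSqrt, dif_pos hA, IsHermitian.cfc, Unitary.conjStarAlgAut_apply]
  rfl

open scoped MatrixOrder in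
lemma psdSqrt_posSemidef {A : Matrix (Fin n) (Fin n) ℝ} (hA : A.PosSemidef) :
    (psdSqrt A).PosSemidef := by
  rw [psdSqrt_eq_cfc hA, ← Matrix.nonneg_iff_posSemidef]; exact CFC.sqrt_nonneg A

open scoped MatrixOrder in
lemma psdSqrt_mul_self {A : Matrix (Fin n) (Fin n) ℝ} (hA : A.PosSemidef) :
    psdSqrt A * psdSqrt A = A := by
  rw [psdSqrt_eq_cfc hA]; exact CFC.sqrt_mul_sqrt_self A (Matrix.nonneg_iff_posSemidef.mpr hA)

lemma psdSqrt_eq {A B : Matrix (Fin n) (Fin n) ℝ} (hB : B.PosSemidef) (h : B * B = A) :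
    psdSqrt A = B := by
  have hA : A.PosSemidef := by
    have := Matrix.posSemidef_conjTranspose_mul_self B
    rwa [hB.isHermitian.eq, h] at this
  rw [psdSqrt_eq_cfc hA]
  open scoped MatrixOrder in
  exact CFC.sqrt_unique h (Matrix.nonneg_iff_posSemidef.mpr hB)

lemma transpose_eq {A : Matrix (Fin n) (Fin n) ℝ} (hA : A.IsHermitian) : Aᵀ = A := by
  simpa using hA.eq

lemma psd_self_mul_self (Z : Matrix (Fin n) (Fin n) ℝ) : (Zᵀ * Z).PosSemidef := by
  have := Matrix.posSemidef_conjTranspose_mul_self Z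
  simpa using this

lemma trace_nonneg_of_psd {A : Matrix (Fin n) (Fin n) ℝ} (hA : A.PosSemidef) :
    0 ≤ A.trace := by
  rw [Matrix.trace]
  apply Finset.sum_nonneg
  intro i _
  simpa [Pi.single_apply] using hA.dotProduct_mulVec_nonneg (Pi.single i 1)

lemma cancel_left {U : Matrix (Fin n) (Fin n) ℝ} (h : Uᵀ * U = 1)
    (X : Matrix (Fin n) (Fin n) ℝ) : Uᵀ * (U * X) = X := by
  rw [← Matrix.mul_assoc, h, one_mul]

lemma cancel_left' {U : Matrix (Fin n) (Fin n) ℝ} (h : U * Uᵀ = 1)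
    (X : Matrix (Fin n) (Fin n) ℝ) : U * (Uᵀ * X) = X := by
  rw [← Matrix.mul_assoc, h, one_mul]

lemma mul_cancel {P Q : Matrix (Fin n) (Fin n) ℝ} (h : P * Q = 1)
    (X : Matrix (Fin n) (Fin n) ℝ) : P * (Q * X) = X := by
  rw [← Matrix.mul_assoc, h, one_mul]

lemma posSemidef_smul {A : Matrix (Fin n) (Fin n) ℝ} (hA : A.PosSemidef) {c : ℝ}
    (hc : 0 ≤ c) : (c • A).PosSemidef := by
  refine Matrix.PosSemidef.of_dotProduct_mulVec_nonneg ?_ fun x => ?_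
  · unfold Matrix.IsHermitian
    rw [Matrix.conjTranspose_smul, hA.1.eq]
    simp
  · have : star x ⬝ᵥ (c • A) *ᵥ x = c * (star x ⬝ᵥ A *ᵥ x) := by
      rw [Matrix.smul_mulVec, dotProduct_smul, smul_eq_mul]
    rw [this]
    exact mul_nonneg hc (hA.dotProduct_mulVec_nonneg x)

lemma polar (Z : Matrix (Fin n) (Fin n) ℝ) :
    ∃ W : Matrix (Fin n) (Fin n) ℝ, Wᵀ * W = 1 ∧ W * psdSqrt (Zᵀ * Z) = Z := by
  have hP : (Zᵀ * Z).PosSemidef := psd_self_mul_self Z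
  set V : Matrix (Fin n) (Fin n) ℝ := (hP.1.eigenvectorUnitary : Matrix (Fin n) (Fin n) ℝ)
    with hVdef
  have hstar : star V = Vᵀ := rfl
  have hVV : Vᵀ * V = 1 := by
    have := hP.1.eigenvectorUnitary.2
    rw [Matrix.mem_unitaryGroup_iff'] at this
    rwa [hstar] at this
  have hVV' : V * Vᵀ = 1 := mul_eq_one_comm.mp hVV
  set d : Fin n → ℝ := hP.1.eigenvalues with hddef
  have hd0 : ∀ i, 0 ≤ d i := hP.eigenvalues_nonneg
  have hspec : Zᵀ * Z = V * diagonal d * Vᵀ := by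
    have := hP.1.spectral_theorem
    rw [Unitary.conjStarAlgAut_apply, hstar] at this
    exact this
  set A : Matrix (Fin n) (Fin n) ℝ := Z * V with hAdef
  have hAtA : Aᵀ * A = diagonal d := by
    have h1 : Aᵀ * A = Vᵀ * (Zᵀ * Z) * V := by
      rw [hAdef, transpose_mul]; noncomm_ring
    rw [h1, hspec]
    calc Vᵀ * (V * diagonal d * Vᵀ) * V
        = (Vᵀ * V) * diagonal d * (Vᵀ * V) := by noncomm_ring
      _ = diagonal d := by rw [hVV]; noncomm_ring
  have hcol : ∀ i j, ∑ k, A k i * A k j = diagonal d i j := by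
    intro i j
    have := congrFun (congrFun hAtA i) j
    simpa [Matrix.mul_apply, Matrix.transpose_apply] using this
  set v : Fin n → EuclideanSpace ℝ (Fin n) :=
    fun i => (WithLp.equiv 2 (Fin n → ℝ)).symm ((Real.sqrt (d i))⁻¹ • fun j => A j i) with hvdef
  have hsne : ∀ i : Fin n, d i ≠ 0 → Real.sqrt (d i) ≠ 0 := fun i hi =>
    ne_of_gt (Real.sqrt_pos.mpr (lt_of_le_of_ne (hd0 i) (Ne.symm hi)))
  have hvon : Orthonormal ℝ (Set.restrict {i | d i ≠ 0} v) := by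
    rw [orthonormal_iff_ite]
    rintro ⟨i, hi⟩ ⟨j, hj⟩
    have hinner : (inner ℝ (v i) (v j) : ℝ) =
        (Real.sqrt (d i))⁻¹ * (Real.sqrt (d j))⁻¹ * (∑ k, A k i * A k j) := by
      simp [hvdef, PiLp.inner_apply, Finset.mul_sum]
      ring_nf
      apply Finset.sum_congr rfl
      intro k _; ring
    by_cases hij : i = j
    · subst hij
      simp only [Subtype.mk.injEq, if_pos rfl, Set.restrict_apply, if_true]
      change inner ℝ (v i) (v i) = _
      rw [hinner, hcol, diagonal_apply_eq]
      have h1 : Real.sqrt (d i) * Real.sqrt (d i) = d i := Real.mul_self_sqrt (hd0 i)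
      field_simp [hsne i hi]
      linarith [h1]
    · change inner ℝ (v i) (v j) = _
      rw [hinner, hcol, diagonal_apply_ne _ hij]
      simp [Subtype.mk.injEq, hij]
  have hcard : Module.finrank ℝ (EuclideanSpace ℝ (Fin n)) = Fintype.card (Fin n) := by simp
  obtain ⟨b, hb⟩ := hvon.exists_orthonormalBasis_extension_of_card_eq hcard
  set W0 : Matrix (Fin n) (Fin n) ℝ := Matrix.of fun j i => b i j with hW0def
  have hW0 : W0ᵀ * W0 = 1 := by
    ext i j
    have := b.orthonormal
    rw [orthonormal_iff_ite] at this
    have h2 := this i j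
    rw [PiLp.inner_apply] at h2
    simpa [Matrix.mul_apply, Matrix.one_apply, hW0def, mul_comm] using h2
  have hWA : W0 * diagonal (fun i => Real.sqrt (d i)) = A := by
    ext j i
    rw [Matrix.mul_diagonal]
    by_cases hdi : d i = 0
    · have hAzero : A j i = 0 := by
        have h0 : ∑ k, A k i * A k i = 0 := by rw [hcol, diagonal_apply_eq, hdi]
        have := (Finset.sum_eq_zero_iff_of_nonneg (fun k _ => mul_self_nonneg (A k i))).mp h0
          j (Finset.mem_univ j)
        exact mul_self_eq_zero.mp this
      simp [hdi, hAzero]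
    · have hbv : b i = v i := hb i hdi
      have : W0 j i = (Real.sqrt (d i))⁻¹ * A j i := by
        rw [hW0def]
        show b i j = _
        rw [hbv, hvdef]
        simp
      rw [this]
      field_simp [hsne i hdi]
  have hpsd : psdSqrt (Zᵀ * Z) = V * diagonal (fun i => Real.sqrt (d i)) * Vᵀ := by
    apply psdSqrt_eq
    · have hdiag : (diagonal fun i => Real.sqrt (d i)).PosSemidef :=
        posSemidef_diagonal_iff.mpr fun i => Real.sqrt_nonneg _
      have := hdiag.mul_mul_conjTranspose_same V
      convert this using 2
      rfl
    · calc (V * diagonal (fun i => Real.sqrt (d i)) * Vᵀ) *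
            (V * diagonal (fun i => Real.sqrt (d i)) * Vᵀ)
          = V * (diagonal (fun i => Real.sqrt (d i)) * (Vᵀ * V) *
              diagonal (fun i => Real.sqrt (d i))) * Vᵀ := by noncomm_ring
        _ = V * diagonal d * Vᵀ := by
            rw [hVV, mul_one, diagonal_mul_diagonal]
            have h1 : (fun i => Real.sqrt (d i) * Real.sqrt (d i)) = d :=
              funext fun i => Real.mul_self_sqrt (hd0 i)
            rw [h1]
        _ = Zᵀ * Z := hspec.symm
  refine ⟨W0 * Vᵀ, ?_, ?_⟩
  · rw [transpose_mul, transpose_transpose]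
    calc V * W0ᵀ * (W0 * Vᵀ) = V * (W0ᵀ * W0) * Vᵀ := by noncomm_ring
      _ = 1 := by rw [hW0]; rw [mul_one]; exact hVV'
  · rw [hpsd]
    calc W0 * Vᵀ * (V * diagonal (fun i => Real.sqrt (d i)) * Vᵀ)
        = W0 * (Vᵀ * V) * diagonal (fun i => Real.sqrt (d i)) * Vᵀ := by noncomm_ring
      _ = A * Vᵀ := by rw [hVV, mul_one, hWA]
      _ = Z := by rw [hAdef]; rw [mul_assoc, hVV', mul_one]

/-- trace norm -/
noncomputable def tnorm (Z : Matrix (Fin n) (Fin n) ℝ) : ℝ := (psdSqrt (Zᵀ * Z)).trace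

lemma trace_mul_psd_le {Q H : Matrix (Fin n) (Fin n) ℝ} (hQ : Qᵀ * Q = 1)
    (hH : H.PosSemidef) : (Q * H).trace ≤ H.trace := by
  set V : Matrix (Fin n) (Fin n) ℝ := (hH.1.eigenvectorUnitary : Matrix (Fin n) (Fin n) ℝ)
  have hstar : star V = Vᵀ := rfl
  have hVV : Vᵀ * V = 1 := by
    have := hH.1.eigenvectorUnitary.2
    rw [Matrix.mem_unitaryGroup_iff'] at this
    rwa [hstar] at this
  have hVV' : V * Vᵀ = 1 := mul_eq_one_comm.mp hVV
  set e : Fin n → ℝ := hH.1.eigenvalues with hedef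
  have he0 : ∀ i, 0 ≤ e i := hH.eigenvalues_nonneg
  have hspec : H = V * diagonal e * Vᵀ := by
    have := hH.1.spectral_theorem
    rw [Unitary.conjStarAlgAut_apply, hstar] at this
    exact this
  set R : Matrix (Fin n) (Fin n) ℝ := Vᵀ * Q * V with hRdef
  have hRR : Rᵀ * R = 1 := by
    rw [hRdef, transpose_mul, transpose_mul, transpose_transpose]
    simp only [Matrix.mul_assoc]
    rw [cancel_left' hVV', cancel_left hQ]
    exact hVV
  have hRdiag : ∀ i, R i i ≤ 1 := by
    intro i
    have hcol : ∑ k, R k i * R k i = 1 := by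
      have := congrFun (congrFun hRR i) i
      simpa [Matrix.mul_apply, Matrix.transpose_apply, Matrix.one_apply] using this
    have h1 : R i i * R i i ≤ 1 := by
      rw [← hcol]
      exact Finset.single_le_sum (fun k _ => mul_self_nonneg (R k i)) (Finset.mem_univ i)
    nlinarith
  have htr1 : (Q * H).trace = (R * diagonal e).trace := by
    have h2 : R * diagonal e = Vᵀ * (Q * (V * diagonal e)) := by rw [hRdef]; noncomm_ring
    conv_rhs => rw [h2, Matrix.trace_mul_comm]
    congr 1
    rw [hspec]
    noncomm_ring
  have htr2 : H.trace = (diagonal e).trace := by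
    rw [hspec, Matrix.trace_mul_comm, show Vᵀ * (V * diagonal e) = (Vᵀ * V) * diagonal e
      by noncomm_ring, hVV, one_mul]
  rw [htr1, htr2, Matrix.trace, Matrix.trace]
  apply Finset.sum_le_sum
  intro i _
  simp only [Matrix.diag_apply, Matrix.mul_diagonal, Matrix.diagonal_apply_eq]
  nlinarith [hRdiag i, he0 i]

lemma trace_mul_le_tnorm {U : Matrix (Fin n) (Fin n) ℝ} (hU : Uᵀ * U = 1)
    (Z : Matrix (Fin n) (Fin n) ℝ) : (U * Z).trace ≤ tnorm Z := by
  obtain ⟨W, hW, hWZ⟩ := polar Z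
  have hQ : (U * W)ᵀ * (U * W) = 1 := by
    rw [transpose_mul]
    calc Wᵀ * Uᵀ * (U * W) = Wᵀ * (Uᵀ * U) * W := by noncomm_ring
      _ = 1 := by rw [hU, mul_one, hW]
  have := trace_mul_psd_le hQ (psdSqrt_posSemidef (psd_self_mul_self Z))
  rw [show U * W * psdSqrt (Zᵀ * Z) = U * (W * psdSqrt (Zᵀ * Z)) by noncomm_ring, hWZ] at this
  exact this

lemma tnorm_triangle (A B : Matrix (Fin n) (Fin n) ℝ) :
    tnorm (A + B) ≤ tnorm A + tnorm B := by
  obtain ⟨W, hW, hWZ⟩ := polar (A + B)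
  have hWW' : W * Wᵀ = 1 := mul_eq_one_comm.mp hW
  have hU : (Wᵀ)ᵀ * Wᵀ = 1 := by rw [transpose_transpose]; exact hWW'
  have h1 : tnorm (A + B) = (Wᵀ * (A + B)).trace := by
    conv_rhs => rw [← hWZ]
    rw [cancel_left hW]
    rfl
  rw [h1, Matrix.mul_add, Matrix.trace_add]
  exact add_le_add (trace_mul_le_tnorm hU A) (trace_mul_le_tnorm hU B)

lemma tnorm_psd {A : Matrix (Fin n) (Fin n) ℝ} (hA : A.PosSemidef) :
    tnorm A = A.trace := by
  rw [tnorm, transpose_eq hA.1, psdSqrt_eq hA rfl]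

lemma tnorm_smul_psd {A : Matrix (Fin n) (Fin n) ℝ} (hA : A.PosSemidef) {c : ℝ} (hc : 0 ≤ c) :
    tnorm (c • A) = c * A.trace := by
  rw [tnorm_psd (posSemidef_smul hA hc), Matrix.trace_smul, smul_eq_mul]

/-- block quadratic-form positivity -/
def Pq (A C B : Matrix (Fin n) (Fin n) ℝ) : Prop :=
  ∀ x y : Fin n → ℝ, 0 ≤ x ⬝ᵥ A *ᵥ x + 2 * (x ⬝ᵥ C *ᵥ y) + y ⬝ᵥ B *ᵥ y

/-- the Gelbrich cross term `Tr (A^{1/2} B A^{1/2})^{1/2}` -/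
noncomputable def gel (A B : Matrix (Fin n) (Fin n) ℝ) : ℝ :=
  (psdSqrt (psdSqrt A * B * psdSqrt A)).trace

lemma dot_transpose_mul (K M : Matrix (Fin n) (Fin n) ℝ) (x y : Fin n → ℝ) :
    x ⬝ᵥ (Kᵀ * M) *ᵥ y = (K *ᵥ x) ⬝ᵥ (M *ᵥ y) := by
  rw [← Matrix.mulVec_mulVec, Matrix.dotProduct_mulVec x Kᵀ, Matrix.vecMul_transpose]

lemma dp_self_nonneg (v : Fin n → ℝ) : 0 ≤ v ⬝ᵥ v :=
  Finset.sum_nonneg fun i _ => mul_self_nonneg (v i)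

lemma sqrt_arg_psd {A B : Matrix (Fin n) (Fin n) ℝ} (hA : A.PosSemidef)
    (hB : B.PosSemidef) : (psdSqrt A * B * psdSqrt A).PosSemidef := by
  have h := hB.mul_mul_conjTranspose_same (psdSqrt A)
  rwa [(psdSqrt_posSemidef hA).1.eq] at h

lemma tnorm_eq_gel {A B : Matrix (Fin n) (Fin n) ℝ} (hA : A.PosSemidef)
    (hB : B.PosSemidef) : tnorm (psdSqrt B * psdSqrt A) = gel A B := by
  have harg : (psdSqrt B * psdSqrt A)ᵀ * (psdSqrt B * psdSqrt A) =
      psdSqrt A * B * psdSqrt A := by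
    rw [transpose_mul, transpose_eq (psdSqrt_posSemidef hA).1,
      transpose_eq (psdSqrt_posSemidef hB).1]
    calc psdSqrt A * psdSqrt B * (psdSqrt B * psdSqrt A)
        = psdSqrt A * (psdSqrt B * psdSqrt B) * psdSqrt A := by noncomm_ring
      _ = psdSqrt A * B * psdSqrt A := by rw [psdSqrt_mul_self hB]
  rw [tnorm, harg, gel]

lemma exists_witness {A B : Matrix (Fin n) (Fin n) ℝ} (hA : A.PosSemidef)
    (hB : B.PosSemidef) : ∃ C : Matrix (Fin n) (Fin n) ℝ, Pq A C B ∧ C.trace = gel A B := by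
  set Rs := psdSqrt A with hRs
  set Rt := psdSqrt B with hRt
  have hRsp := psdSqrt_posSemidef hA
  have hRtp := psdSqrt_posSemidef hB
  obtain ⟨W, hW, hWZ⟩ := polar (Rt * Rs)
  have hWW' : W * Wᵀ = 1 := mul_eq_one_comm.mp hW
  have hZZ : (Rt * Rs)ᵀ * (Rt * Rs) = Rs * B * Rs := by
    rw [transpose_mul, transpose_eq hRsp.1, transpose_eq hRtp.1]
    calc Rs * Rt * (Rt * Rs) = Rs * (Rt * Rt) * Rs := by noncomm_ring
      _ = Rs * B * Rs := by rw [psdSqrt_mul_self hB]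
  have hWZ' : W * psdSqrt (Rs * B * Rs) = Rt * Rs := by rw [← hZZ]; exact hWZ
  refine ⟨Rs * Wᵀ * Rt, ?_, ?_⟩
  · intro x y
    have h1 : x ⬝ᵥ A *ᵥ x = (Rs *ᵥ x) ⬝ᵥ (Rs *ᵥ x) := by
      conv_lhs => rw [show A = Rsᵀ * Rs by rw [transpose_eq hRsp.1, psdSqrt_mul_self hA]]
      rw [dot_transpose_mul]
    have h3 : y ⬝ᵥ B *ᵥ y = (Rt *ᵥ y) ⬝ᵥ (Rt *ᵥ y) := by
      conv_lhs => rw [show B = Rtᵀ * Rt by rw [transpose_eq hRtp.1, psdSqrt_mul_self hB]]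
      rw [dot_transpose_mul]
    have h2 : x ⬝ᵥ (Rs * Wᵀ * Rt) *ᵥ y = (Rs *ᵥ x) ⬝ᵥ (Wᵀ *ᵥ (Rt *ᵥ y)) := by
      rw [show Rs * Wᵀ * Rt = Rsᵀ * (Wᵀ * Rt) by rw [transpose_eq hRsp.1]; noncomm_ring,
        dot_transpose_mul, Matrix.mulVec_mulVec]
    have h4 : (Wᵀ *ᵥ (Rt *ᵥ y)) ⬝ᵥ (Wᵀ *ᵥ (Rt *ᵥ y)) = (Rt *ᵥ y) ⬝ᵥ (Rt *ᵥ y) := by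
      rw [← dot_transpose_mul Wᵀ Wᵀ, transpose_transpose, hWW', Matrix.one_mulVec]
    set u := Rs *ᵥ x
    set w := Wᵀ *ᵥ (Rt *ᵥ y)
    rw [h1, h2, h3, ← h4]
    have hsq : (u + w) ⬝ᵥ (u + w) = u ⬝ᵥ u + 2 * (u ⬝ᵥ w) + w ⬝ᵥ w := by
      rw [dotProduct_add, add_dotProduct, add_dotProduct, dotProduct_comm w u]
      ring
    rw [← hsq]
    exact dp_self_nonneg _
  · rw [Matrix.trace_mul_cycle, Matrix.trace_mul_comm, ← hWZ', cancel_left hW]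
    rfl

lemma conjT_eq (M : Matrix (Fin n) (Fin n) ℝ) : Mᴴ = Mᵀ := rfl

lemma dot_self_pos {v : Fin n → ℝ} (hv : v ≠ 0) : 0 < v ⬝ᵥ v :=
  lt_of_le_of_ne (dp_self_nonneg v) fun h => hv (dotProduct_self_eq_zero.mp h.symm)

lemma posDef_of_psd_det_ne {R : Matrix (Fin n) (Fin n) ℝ} (hR : R.PosSemidef)
    (h : R.det ≠ 0) : R.PosDef := by
  refine Matrix.PosDef.of_dotProduct_mulVec_pos hR.1 fun x hx => ?_
  rcases lt_or_eq_of_le (hR.dotProduct_mulVec_nonneg x) with hlt | heq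
  · exact hlt
  · exfalso
    have hx0 : x ⬝ᵥ R *ᵥ x = 0 := by simpa using heq.symm
    have hfac : x ⬝ᵥ R *ᵥ x = (psdSqrt R *ᵥ x) ⬝ᵥ (psdSqrt R *ᵥ x) := by
      conv_lhs => rw [show R = (psdSqrt R)ᵀ * psdSqrt R by
        rw [transpose_eq (psdSqrt_posSemidef hR).1, psdSqrt_mul_self hR]]
      rw [dot_transpose_mul]
    have hRx : psdSqrt R *ᵥ x = 0 := by
      by_contra hne
      have := dot_self_pos hne
      rw [hfac] at hx0
      linarith
    have hRx2 : R *ᵥ x = 0 := by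
      conv_lhs => rw [show R = psdSqrt R * psdSqrt R from (psdSqrt_mul_self hR).symm]
      rw [← Matrix.mulVec_mulVec, hRx, Matrix.mulVec_zero]
    have hx' : x = 0 := by
      have h1 : R⁻¹ *ᵥ (R *ᵥ x) = x := by
        rw [Matrix.mulVec_mulVec, Matrix.nonsing_inv_mul R (isUnit_iff_ne_zero.mpr h),
          Matrix.one_mulVec]
      rw [hRx2, Matrix.mulVec_zero] at h1
      exact h1.symm
    exact hx hx'

lemma smul_one_hermitian {δ : ℝ} :
    ((δ : ℝ) • (1 : Matrix (Fin n) (Fin n) ℝ)).IsHermitian := by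
  unfold Matrix.IsHermitian
  rw [Matrix.conjTranspose_smul, Matrix.conjTranspose_one]
  simp

lemma psd_add_smul_one_posDef {P : Matrix (Fin n) (Fin n) ℝ} (hP : P.PosSemidef) {δ : ℝ}
    (hδ : 0 < δ) : (P + δ • 1).PosDef := by
  refine Matrix.PosDef.of_dotProduct_mulVec_pos (hP.1.add smul_one_hermitian) fun x hx => ?_
  have h2 : star x ⬝ᵥ (P + δ • (1 : Matrix (Fin n) (Fin n) ℝ)) *ᵥ x
      = star x ⬝ᵥ P *ᵥ x + δ * (x ⬝ᵥ x) := by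
    rw [Matrix.add_mulVec, dotProduct_add, Matrix.smul_mulVec, Matrix.one_mulVec,
      dotProduct_smul, smul_eq_mul]
    simp
  rw [h2]
  have h3 : 0 < x ⬝ᵥ x := dot_self_pos hx
  have h4 : 0 ≤ star x ⬝ᵥ P *ᵥ x := hP.dotProduct_mulVec_nonneg x
  nlinarith

lemma psdSqrt_posDef {P : Matrix (Fin n) (Fin n) ℝ} (hP : P.PosDef) :
    (psdSqrt P).PosDef := by
  apply posDef_of_psd_det_ne (psdSqrt_posSemidef hP.posSemidef)
  intro h
  have := congrArg Matrix.det (psdSqrt_mul_self hP.posSemidef)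
  rw [Matrix.det_mul, h, mul_zero] at this
  exact hP.det_pos.ne' this.symm

lemma trace_mul_psd_nonneg {P Q : Matrix (Fin n) (Fin n) ℝ} (hP : P.PosSemidef)
    (hQ : Q.PosSemidef) : 0 ≤ (P * Q).trace := by
  rw [show P * Q = psdSqrt P * (psdSqrt P * Q) by
    rw [← Matrix.mul_assoc, psdSqrt_mul_self hP], Matrix.trace_mul_comm]
  exact trace_nonneg_of_psd (by
    have := sqrt_arg_psd hP hQ
    rwa [show psdSqrt P * Q * psdSqrt P = psdSqrt P * Q * psdSqrt P from rfl] at this)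

lemma sum_col_quad (R M S : Matrix (Fin n) (Fin n) ℝ) :
    ∑ i, (fun j => R j i) ⬝ᵥ M *ᵥ (fun j => S j i) = (Rᵀ * M * S).trace := by
  simp only [Matrix.trace, Matrix.diag_apply, Matrix.mul_apply, Matrix.transpose_apply,
    dotProduct, Matrix.mulVec, Finset.sum_mul, Finset.mul_sum]
  apply Finset.sum_congr rfl
  intro i _
  rw [Finset.sum_comm]
  apply Finset.sum_congr rfl
  intro j _
  apply Finset.sum_congr rfl
  intro k _
  ring

lemma key_sum {A B C : Matrix (Fin n) (Fin n) ℝ} (hPq : Pq A C B)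
    (R S : Matrix (Fin n) (Fin n) ℝ) :
    2 * (Rᵀ * C * S).trace ≤ (Rᵀ * A * R).trace + (Sᵀ * B * S).trace := by
  have h0 : 0 ≤ ∑ i, ((fun j => R j i) ⬝ᵥ A *ᵥ (fun j => R j i)
      + 2 * ((fun j => R j i) ⬝ᵥ C *ᵥ (fun j => -(S j i)))
      + (fun j => -(S j i)) ⬝ᵥ B *ᵥ (fun j => -(S j i))) :=
    Finset.sum_nonneg fun i _ => hPq _ _
  have hrw : ∀ i : Fin n, ((fun j => R j i) ⬝ᵥ A *ᵥ (fun j => R j i)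
      + 2 * ((fun j => R j i) ⬝ᵥ C *ᵥ (fun j => -(S j i)))
      + (fun j => -(S j i)) ⬝ᵥ B *ᵥ (fun j => -(S j i)))
      = (fun j => R j i) ⬝ᵥ A *ᵥ (fun j => R j i)
        - 2 * ((fun j => R j i) ⬝ᵥ C *ᵥ (fun j => S j i))
        + (fun j => S j i) ⬝ᵥ B *ᵥ (fun j => S j i) := by
    intro i
    have hneg : (fun j => -(S j i)) = -(fun j => S j i) := rfl
    rw [hneg, Matrix.mulVec_neg, dotProduct_neg, neg_dotProduct, Matrix.mulVec_neg,
      dotProduct_neg, neg_neg]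
    ring
  rw [Finset.sum_congr rfl (fun i _ => hrw i)] at h0
  rw [Finset.sum_add_distrib, Finset.sum_sub_distrib, ← Finset.mul_sum,
    sum_col_quad, sum_col_quad, sum_col_quad] at h0
  linarith

lemma trace_le_gel {A B C : Matrix (Fin n) (Fin n) ℝ} (hA : A.PosSemidef)
    (hB : B.PosSemidef) (hPq : Pq A C B) : C.trace ≤ gel A B := by
  have main : ∀ δ : ℝ, 0 < δ → C.trace ≤ gel A B
      + δ * ((psdSqrt B).trace + (psdSqrt A).trace) + δ * δ * n := by
    intro δ hδ
    set Rs := psdSqrt A with hRsdef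
    set Rt := psdSqrt B with hRtdef
    have hRsp : Rs.PosSemidef := psdSqrt_posSemidef hA
    have hRtp : Rt.PosSemidef := psdSqrt_posSemidef hB
    have hRsRs : Rs * Rs = A := psdSqrt_mul_self hA
    have hRtRt : Rt * Rt = B := psdSqrt_mul_self hB
    set Rsd : Matrix (Fin n) (Fin n) ℝ := Rs + δ • 1 with hRsddef
    set Rtd : Matrix (Fin n) (Fin n) ℝ := Rt + δ • 1 with hRtddef
    have hRsdPD : Rsd.PosDef := psd_add_smul_one_posDef hRsp hδ
    have hRtdPD : Rtd.PosDef := psd_add_smul_one_posDef hRtp hδ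
    have hRsdsym : Rsdᵀ = Rsd := transpose_eq hRsdPD.1
    have hRtdsym : Rtdᵀ = Rtd := transpose_eq hRtdPD.1
    have hRsddet : IsUnit Rsd.det := isUnit_iff_ne_zero.mpr hRsdPD.det_pos.ne'
    have hRsdinv : Rsd⁻¹ * Rsd = 1 := Matrix.nonsing_inv_mul _ hRsddet
    have hRsdinv' : Rsd * Rsd⁻¹ = 1 := Matrix.mul_nonsing_inv _ hRsddet
    set N : Matrix (Fin n) (Fin n) ℝ := Rtd * Rsd with hNdef
    have hNdet : N.det ≠ 0 := by
      rw [hNdef, Matrix.det_mul]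
      exact mul_ne_zero hRtdPD.det_pos.ne' hRsdPD.det_pos.ne'
    set Bd : Matrix (Fin n) (Fin n) ℝ := Rtd * Rtd with hBddef
    have hNN : Nᵀ * N = Rsd * Bd * Rsd := by
      rw [hNdef, transpose_mul, hRsdsym, hRtdsym, hBddef]
      noncomm_ring
    have hArgPSD : (Rsd * Bd * Rsd).PosSemidef := hNN ▸ psd_self_mul_self N
    have hArgdet : (Rsd * Bd * Rsd).det ≠ 0 := by
      rw [← hNN, Matrix.det_mul, Matrix.det_transpose]
      exact mul_ne_zero hNdet hNdet
    have hArgPD : (Rsd * Bd * Rsd).PosDef := posDef_of_psd_det_ne hArgPSD hArgdet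
    set Gd : Matrix (Fin n) (Fin n) ℝ := psdSqrt (Rsd * Bd * Rsd) with hGddef
    have hGdPD : Gd.PosDef := psdSqrt_posDef hArgPD
    have hGdGd : Gd * Gd = Rsd * Bd * Rsd := psdSqrt_mul_self hArgPSD
    have hGddet : IsUnit Gd.det := isUnit_iff_ne_zero.mpr hGdPD.det_pos.ne'
    have hGdinv : Gd⁻¹ * Gd = 1 := Matrix.nonsing_inv_mul _ hGddet
    have hGdinv' : Gd * Gd⁻¹ = 1 := Matrix.mul_nonsing_inv _ hGddet
    set Tm : Matrix (Fin n) (Fin n) ℝ := Rsd⁻¹ * Gd * Rsd⁻¹ with hTmdef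
    have hRsdInvSym : (Rsd⁻¹)ᵀ = Rsd⁻¹ := by
      rw [Matrix.transpose_nonsing_inv, hRsdsym]
    have hTmPSD : Tm.PosSemidef := by
      have h := hGdPD.posSemidef.mul_mul_conjTranspose_same Rsd⁻¹
      rw [conjT_eq, hRsdInvSym] at h
      exact h
    have hTmdet : Tm.det ≠ 0 := by
      rw [hTmdef, Matrix.det_mul, Matrix.det_mul]
      have hi : Rsd⁻¹.det ≠ 0 := by
        rw [Matrix.det_nonsing_inv]
        simpa using hRsdPD.det_pos.ne'
      exact mul_ne_zero (mul_ne_zero hi hGdPD.det_pos.ne') hi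
    have hTmPD : Tm.PosDef := posDef_of_psd_det_ne hTmPSD hTmdet
    set X : Matrix (Fin n) (Fin n) ℝ := psdSqrt Tm with hXdef
    have hXPD : X.PosDef := psdSqrt_posDef hTmPD
    have hXsym : Xᵀ = X := transpose_eq hXPD.1
    have hXX : X * X = Tm := psdSqrt_mul_self hTmPD.posSemidef
    have hXdet : IsUnit X.det := isUnit_iff_ne_zero.mpr hXPD.det_pos.ne'
    have hXinv : X⁻¹ * X = 1 := Matrix.nonsing_inv_mul _ hXdet
    have hXinv' : X * X⁻¹ = 1 := Matrix.mul_nonsing_inv _ hXdet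
    have hXiSym : (X⁻¹)ᵀ = X⁻¹ := by rw [Matrix.transpose_nonsing_inv, hXsym]
    -- the key inequality
    have hkey := key_sum hPq X X⁻¹
    rw [hXsym, hXiSym] at hkey
    have t1 : (X * C * X⁻¹).trace = C.trace := by
      rw [Matrix.trace_mul_cycle X C X⁻¹, hXinv, one_mul]
    have t2 : (X * A * X).trace ≤ Gd.trace := by
      have e1 : (X * A * X).trace = (A * Tm).trace := by
        rw [Matrix.trace_mul_cycle X A X, Matrix.trace_mul_comm (X * X) A, hXX]
      have hAdA : Rsd * Rsd - A = (2 * δ) • Rs + (δ * δ) • (1 : Matrix (Fin n) (Fin n) ℝ) := by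
        rw [hRsddef]
        simp only [add_mul, mul_add, smul_mul_assoc, mul_smul_comm, one_mul, mul_one,
          smul_smul, hRsRs]
        module
      have hDelta : (Rsd * Rsd - A).PosSemidef := by
        rw [hAdA]
        exact (posSemidef_smul hRsp (by positivity)).add
          (posSemidef_smul Matrix.PosSemidef.one (by positivity))
      have e2 : (A * Tm).trace ≤ (Rsd * Rsd * Tm).trace := by
        have hnn := trace_mul_psd_nonneg hDelta hTmPSD
        rw [Matrix.sub_mul, Matrix.trace_sub] at hnn
        linarith
      have e3 : (Rsd * Rsd * Tm).trace = Gd.trace := by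
        rw [hTmdef]
        rw [show Rsd * Rsd * (Rsd⁻¹ * Gd * Rsd⁻¹)
          = Rsd * ((Rsd * Rsd⁻¹) * Gd * Rsd⁻¹) by noncomm_ring, hRsdinv', one_mul]
        rw [Matrix.trace_mul_comm, Matrix.mul_assoc, hRsdinv, mul_one]
      linarith
    have t3 : (X⁻¹ * B * X⁻¹).trace ≤ Gd.trace := by
      have hXiXi : X⁻¹ * X⁻¹ = Tm⁻¹ := by rw [← Matrix.mul_inv_rev, hXX]
      have e1 : (X⁻¹ * B * X⁻¹).trace = (B * Tm⁻¹).trace := by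
        rw [Matrix.trace_mul_cycle X⁻¹ B X⁻¹, hXiXi, Matrix.trace_mul_comm]
      have hTminv : Tm⁻¹ = Rsd * Gd⁻¹ * Rsd := by
        apply Matrix.inv_eq_right_inv
        rw [hTmdef]
        simp only [Matrix.mul_assoc]
        rw [mul_cancel hRsdinv, mul_cancel hGdinv']
        exact hRsdinv
      have hTminvPSD : (Tm⁻¹).PosSemidef := hTmPD.inv.posSemidef
      have hBdB : (Bd - B).PosSemidef := by
        have hBdA : Bd - B = (2 * δ) • Rt + (δ * δ) • (1 : Matrix (Fin n) (Fin n) ℝ) := by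
          rw [hBddef, hRtddef]
          simp only [add_mul, mul_add, smul_mul_assoc, mul_smul_comm, one_mul, mul_one,
            smul_smul, hRtRt]
          module
        rw [hBdA]
        exact (posSemidef_smul hRtp (by positivity)).add
          (posSemidef_smul Matrix.PosSemidef.one (by positivity))
      have e2 : (B * Tm⁻¹).trace ≤ (Bd * Tm⁻¹).trace := by
        have hnn := trace_mul_psd_nonneg hBdB hTminvPSD
        rw [Matrix.sub_mul, Matrix.trace_sub] at hnn
        linarith
      have e3 : (Bd * Tm⁻¹).trace = Gd.trace := by
        rw [hTminv]
        rw [show Bd * (Rsd * Gd⁻¹ * Rsd) = (Bd * Rsd * Gd⁻¹) * Rsd by noncomm_ring,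
          Matrix.trace_mul_comm]
        rw [show Rsd * (Bd * Rsd * Gd⁻¹) = (Rsd * Bd * Rsd) * Gd⁻¹ by noncomm_ring,
          ← hGdGd, Matrix.mul_assoc, hGdinv', mul_one]
      linarith
    have hCG : C.trace ≤ Gd.trace := by
      rw [t1] at hkey
      linarith
    -- bound Gd.trace
    have hGdtr : Gd.trace = tnorm N := by rw [tnorm, hNN]
    have hNdecomp : N = Rt * Rs + (δ • Rt + (δ • Rs + (δ * δ) •
        (1 : Matrix (Fin n) (Fin n) ℝ))) := by
      rw [hNdef, hRtddef, hRsddef]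
      simp only [add_mul, mul_add, smul_mul_assoc, mul_smul_comm, one_mul, mul_one, smul_smul]
      module
    have htn : tnorm N ≤ gel A B + (δ * Rt.trace + (δ * Rs.trace + (δ * δ) * n)) := by
      rw [hNdecomp]
      calc tnorm (Rt * Rs + (δ • Rt + (δ • Rs + (δ * δ) • 1)))
          ≤ tnorm (Rt * Rs) + tnorm (δ • Rt + (δ • Rs + (δ * δ) • 1)) := tnorm_triangle _ _
        _ ≤ tnorm (Rt * Rs) + (tnorm (δ • Rt) + tnorm (δ • Rs + (δ * δ) • 1)) := by
            linarith [tnorm_triangle (δ • Rt) (δ • Rs + (δ * δ) •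
              (1 : Matrix (Fin n) (Fin n) ℝ))]
        _ ≤ tnorm (Rt * Rs) + (tnorm (δ • Rt) + (tnorm (δ • Rs) + tnorm ((δ * δ) • 1))) := by
            linarith [tnorm_triangle (δ • Rs) ((δ * δ) • (1 : Matrix (Fin n) (Fin n) ℝ))]
        _ = gel A B + (δ * Rt.trace + (δ * Rs.trace + (δ * δ) * n)) := by
            rw [tnorm_eq_gel hA hB, tnorm_smul_psd hRtp hδ.le, tnorm_smul_psd hRsp hδ.le,
              tnorm_smul_psd Matrix.PosSemidef.one (by positivity), Matrix.trace_one]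
            simp
    have := hGdtr ▸ hCG
    calc C.trace ≤ tnorm N := this
      _ ≤ gel A B + (δ * Rt.trace + (δ * Rs.trace + (δ * δ) * n)) := htn
      _ = gel A B + δ * (Rt.trace + Rs.trace) + δ * δ * n := by ring
  -- limit argument
  by_contra hcon
  push_neg at hcon
  set c : ℝ := (psdSqrt B).trace + (psdSqrt A).trace with hcdef
  have hc0 : 0 ≤ c := add_nonneg (trace_nonneg_of_psd (psdSqrt_posSemidef hB))
    (trace_nonneg_of_psd (psdSqrt_posSemidef hA))
  have hn0 : (0 : ℝ) ≤ n := Nat.cast_nonneg n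
  set ε : ℝ := C.trace - gel A B with hεdef
  have hε0 : 0 < ε := by simp only [hεdef]; linarith
  set δ : ℝ := min 1 (ε / (2 * (c + n + 1))) with hδdef
  have hδpos : 0 < δ := lt_min one_pos (div_pos hε0 (by positivity))
  have h1 := main δ hδpos
  have hδ1 : δ ≤ 1 := min_le_left _ _
  have hδ2 : δ ≤ ε / (2 * (c + n + 1)) := min_le_right _ _
  have h2 : δ * (2 * (c + n + 1)) ≤ ε := (le_div_iff₀ (by positivity)).mp hδ2
  have hδδ : δ * δ * n ≤ δ * n := by nlinarith
  have h2' : 2 * (δ * c) + 2 * (δ * n) + 2 * δ ≤ ε := by nlinarith [h2]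
  linarith

lemma hermitian_smul {A : Matrix (Fin n) (Fin n) ℝ} (hA : A.IsHermitian) (c : ℝ) :
    (c • A).IsHermitian := by
  unfold Matrix.IsHermitian
  rw [Matrix.conjTranspose_smul, hA.eq]
  simp

lemma vecMulVec_hermitian (v : Fin n → ℝ) : (Matrix.vecMulVec v v).IsHermitian := by
  unfold Matrix.IsHermitian
  ext i j
  simp [Matrix.vecMulVec_apply, mul_comm]

lemma vecMulVec_mulVec (v y : Fin n → ℝ) :
    Matrix.vecMulVec v v *ᵥ y = (v ⬝ᵥ y) • v := by
  ext i
  simp only [Matrix.mulVec, Matrix.vecMulVec_apply, dotProduct, Pi.smul_apply, smul_eq_mul,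
    Finset.sum_mul, Finset.mul_sum]
  apply Finset.sum_congr rfl
  intro j _
  ring

lemma dot_vecMulVec (v x y : Fin n → ℝ) :
    x ⬝ᵥ Matrix.vecMulVec v v *ᵥ y = (v ⬝ᵥ x) * (v ⬝ᵥ y) := by
  rw [vecMulVec_mulVec, dotProduct_smul, smul_eq_mul, dotProduct_comm x v]
  ring

lemma trace_vecMulVec (v : Fin n → ℝ) : (Matrix.vecMulVec v v).trace = ∑ i, v i * v i := by
  simp [Matrix.trace, Matrix.vecMulVec_apply]

lemma Bsq_eq (S T : Matrix (Fin n) (Fin n) ℝ) :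
    Bsq S T = S.trace + T.trace - 2 * gel S T := by
  rw [Bsq, gel, Matrix.trace_sub, Matrix.trace_add, Matrix.trace_smul, smul_eq_mul]

end GelAux

open GelAux

/-- the moment uncertainty set
`V_θ(μ̃, Σ̃) = {(μ, M) : M − μμᵀ ⪰ 0, ‖μ − μ̃‖₂² + B²(M − μμᵀ, Σ̃) ≤ θ²}` is convex. -/
theorem moment_uncertainty_set_convex
    (n : ℕ) (hn : 1 ≤ n) (muT : Fin n → ℝ) (SigT : Matrix (Fin n) (Fin n) ℝ)
    (hSigT : SigT.PosSemidef) (θ : ℝ) (hθ : 0 < θ) :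
    Convex ℝ {p : (Fin n → ℝ) × Matrix (Fin n) (Fin n) ℝ |
        (p.2 - Matrix.vecMulVec p.1 p.1).PosSemidef ∧
          (∑ i, (p.1 i - muT i) ^ 2) +
            Bsq (p.2 - Matrix.vecMulVec p.1 p.1) SigT ≤ θ ^ 2} := by
  rintro ⟨μ1, M1⟩ ⟨hp1, hp2⟩ ⟨μ2, M2⟩ ⟨hq1, hq2⟩ a b ha hb hab
  have hb' : b = 1 - a := by linarith
  subst hb'
  set μ : Fin n → ℝ := a • μ1 + (1 - a) • μ2 with hμ
  set M : Matrix (Fin n) (Fin n) ℝ := a • M1 + (1 - a) • M2 with hM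
  show (M - Matrix.vecMulVec μ μ).PosSemidef ∧
    (∑ i, (μ i - muT i) ^ 2) + Bsq (M - Matrix.vecMulVec μ μ) SigT ≤ θ ^ 2
  have hstar : ∀ x : Fin n → ℝ, star x = x := fun x => funext fun i => by simp
  have hquadpt : ∀ (x : Fin n → ℝ) (Mv : Matrix (Fin n) (Fin n) ℝ) (μv : Fin n → ℝ),
      x ⬝ᵥ (Mv - Matrix.vecMulVec μv μv) *ᵥ x
        = x ⬝ᵥ Mv *ᵥ x - (μv ⬝ᵥ x) * (μv ⬝ᵥ x) := by
    intro x Mv μv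
    rw [Matrix.sub_mulVec, dotProduct_sub, dot_vecMulVec]
  have hMx : ∀ x : Fin n → ℝ,
      x ⬝ᵥ M *ᵥ x = a * (x ⬝ᵥ M1 *ᵥ x) + (1 - a) * (x ⬝ᵥ M2 *ᵥ x) := by
    intro x
    rw [hM, Matrix.add_mulVec, dotProduct_add, Matrix.smul_mulVec,
      Matrix.smul_mulVec, dotProduct_smul, dotProduct_smul, smul_eq_mul, smul_eq_mul]
  have hμx : ∀ x : Fin n → ℝ, μ ⬝ᵥ x = a * (μ1 ⬝ᵥ x) + (1 - a) * (μ2 ⬝ᵥ x) := by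
    intro x
    rw [hμ, add_dotProduct, smul_dotProduct, smul_dotProduct, smul_eq_mul, smul_eq_mul]
  have hM1h : M1.IsHermitian := by
    have := hp1.1.add (vecMulVec_hermitian μ1)
    simpa using this
  have hM2h : M2.IsHermitian := by
    have := hq1.1.add (vecMulVec_hermitian μ2)
    simpa using this
  have hherm : (M - Matrix.vecMulVec μ μ).IsHermitian :=
    ((hermitian_smul hM1h a).add (hermitian_smul hM2h (1 - a))).sub (vecMulVec_hermitian μ)
  have hpsd : (M - Matrix.vecMulVec μ μ).PosSemidef := by
    refine Matrix.PosSemidef.of_dotProduct_mulVec_nonneg hherm fun x => ?_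
    rw [hstar x, hquadpt, hMx, hμx]
    have h1 := hp1.dotProduct_mulVec_nonneg x
    rw [hstar x, hquadpt] at h1
    have h2 := hq1.dotProduct_mulVec_nonneg x
    rw [hstar x, hquadpt] at h2
    nlinarith [mul_nonneg ha h1, mul_nonneg hb h2,
      mul_nonneg (mul_nonneg ha hb) (sq_nonneg (μ1 ⬝ᵥ x - μ2 ⬝ᵥ x))]
  obtain ⟨C1, hC1P, hC1tr⟩ := exists_witness hp1 hSigT
  obtain ⟨C2, hC2P, hC2tr⟩ := exists_witness hq1 hSigT
  have hCx : ∀ (x y : Fin n → ℝ),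
      x ⬝ᵥ (a • C1 + (1 - a) • C2) *ᵥ y
        = a * (x ⬝ᵥ C1 *ᵥ y) + (1 - a) * (x ⬝ᵥ C2 *ᵥ y) := by
    intro x y
    rw [Matrix.add_mulVec, dotProduct_add, Matrix.smul_mulVec,
      Matrix.smul_mulVec, dotProduct_smul, dotProduct_smul, smul_eq_mul, smul_eq_mul]
  have hPqC : Pq (M - Matrix.vecMulVec μ μ) (a • C1 + (1 - a) • C2) SigT := by
    intro x y
    have h1 := hC1P x y
    have h2 := hC2P x y
    rw [hquadpt] at h1 h2
    rw [hquadpt, hCx, hMx, hμx]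
    nlinarith [mul_nonneg ha h1, mul_nonneg hb h2,
      mul_nonneg (mul_nonneg ha hb) (sq_nonneg (μ1 ⬝ᵥ x - μ2 ⬝ᵥ x))]
  have hCle : (a • C1 + (1 - a) • C2).trace ≤ gel (M - Matrix.vecMulVec μ μ) SigT :=
    trace_le_gel hpsd hSigT hPqC
  have hCtr : (a • C1 + (1 - a) • C2).trace
      = a * gel (M1 - Matrix.vecMulVec μ1 μ1) SigT
        + (1 - a) * gel (M2 - Matrix.vecMulVec μ2 μ2) SigT := by
    rw [Matrix.trace_add, Matrix.trace_smul, Matrix.trace_smul, hC1tr, hC2tr,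
      smul_eq_mul, smul_eq_mul]
  refine ⟨hpsd, ?_⟩
  rw [Bsq_eq]
  rw [Bsq_eq] at hp2 hq2
  have htr : ∀ (Mv : Matrix (Fin n) (Fin n) ℝ) (μv : Fin n → ℝ),
      (Mv - Matrix.vecMulVec μv μv).trace = Mv.trace - ∑ i, μv i * μv i := by
    intro Mv μv
    rw [Matrix.trace_sub, GelAux.trace_vecMulVec]
  rw [htr] at hp2 hq2 ⊢
  have hMtr : M.trace = a * M1.trace + (1 - a) * M2.trace := by
    rw [hM, Matrix.trace_add, Matrix.trace_smul, Matrix.trace_smul, smul_eq_mul, smul_eq_mul]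
  have hsum : ∀ μv : Fin n → ℝ, (∑ i, (μv i - muT i) ^ 2) - (∑ i, μv i * μv i)
      = ∑ i, (muT i ^ 2 - 2 * μv i * muT i) := by
    intro μv
    rw [← Finset.sum_sub_distrib]
    apply Finset.sum_congr rfl
    intro i _
    ring
  have hSμ : (∑ i, (muT i ^ 2 - 2 * μ i * muT i))
      = a * (∑ i, (muT i ^ 2 - 2 * μ1 i * muT i))
        + (1 - a) * (∑ i, (muT i ^ 2 - 2 * μ2 i * muT i)) := by
    rw [Finset.mul_sum, Finset.mul_sum, ← Finset.sum_add_distrib]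
    apply Finset.sum_congr rfl
    intro i _
    have : μ i = a * μ1 i + (1 - a) * μ2 i := by
      rw [hμ]
      simp [Pi.add_apply, Pi.smul_apply, smul_eq_mul]
    rw [this]
    ring
  have e1 : (∑ i, (muT i ^ 2 - 2 * μ1 i * muT i)) + M1.trace + SigT.trace
      - 2 * gel (M1 - Matrix.vecMulVec μ1 μ1) SigT ≤ θ ^ 2 := by
    linarith [hsum μ1, hp2]
  have e2 : (∑ i, (muT i ^ 2 - 2 * μ2 i * muT i)) + M2.trace + SigT.trace
      - 2 * gel (M2 - Matrix.vecMulVec μ2 μ2) SigT ≤ θ ^ 2 := by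
    linarith [hsum μ2, hq2]
  have hgoal : (∑ i, (muT i ^ 2 - 2 * μ i * muT i)) + M.trace + SigT.trace
      - 2 * gel (M - Matrix.vecMulVec μ μ) SigT ≤ θ ^ 2 := by
    nlinarith [mul_nonneg ha (sub_nonneg.mpr e1), mul_nonneg hb (sub_nonneg.mpr e2),
      hCle, hCtr, hSμ, hMtr]
  linarith [hsum μ, hgoal]
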